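/- Suppose dim_ℂ S = 4 and dim_ℂ R = 4. Let Q = s₁ ⊗ r₁ + s₂ ⊗ r₂ where s₁, s₂ ∈ S are linearly independent, r₁, r₂ ∈ R are linearly independent, and ω(r₁, r₂) = 0 (a nonminimal square-zero supercharge of the N=(2,0) algebra). Then the range of the linear map β(Q, −) : S ⊗ R → ⋀²S equals the subspace (s₁ ∧ S) + (s₂ ∧ S) of ⋀²S and has dimension 5, and the kernel of β(Q, −) has dimension 11. (This is the paper's claim that a nonminimal supercharge has five invariant directions, so its twist is defined on the product of a smooth four-manifold and a Riemann surface.) -/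

import Mathlib

open TensorProduct ExteriorAlgebra

/-- The wedge `s ∧ t` as an element of the second exterior power `⋀[ℂ]^2 S`. -/
noncomputable def wedge {S : Type} [AddCommGroup S] [Module ℂ S] (s t : S) : ⋀[ℂ]^2 S :=
  ⟨ι ℂ s * ι ℂ t, by
    show _ ∈ LinearMap.range (ι ℂ : S →ₗ[ℂ] ExteriorAlgebra ℂ S) ^ 2
    rw [pow_two]
    exact Submodule.mul_mem_mul (LinearMap.mem_range_self _ s) (LinearMap.mem_range_self _ t)⟩

/-- For fixed `s`, the linear map `S → ⋀²S`, `t ↦ s ∧ t`; its range is the subspace `s ∧ S`. -/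
noncomputable def wedgeMap {S : Type} [AddCommGroup S] [Module ℂ S] (s : S) :
    S →ₗ[ℂ] ⋀[ℂ]^2 S where
  toFun t := wedge s t
  map_add' t t' := Subtype.ext <| by simp [wedge, mul_add]
  map_smul' a t := Subtype.ext <| by simp [wedge, mul_smul_comm]

/-!
Since `β (Q, s ⊗ r) = ω(r₁, r) • s₁ ∧ s + ω(r₂, r) • s₂ ∧ s` and nondegeneracy makes `ω(r₁, -)`,
`ω(r₂, -)` linearly independent, there are `c₁, c₂ ∈ R` with `ω(rᵢ, cⱼ) = δᵢⱼ`, and then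
`β (Q, s ⊗ cᵢ) = sᵢ ∧ s`; hence the range is `s₁ ∧ S + s₂ ∧ S`. Completing `s₁, s₂` to a basis
`s₁, s₂, s₃, s₄` of `S`, this subspace together with `s₃ ∧ s₄` spans `⋀²S`, while the functional
`s₃* ∧ s₄*` vanishes on it but not on `s₃ ∧ s₄`. So it is a hyperplane in the 6-dimensional `⋀²S`,
and rank–nullity on the 16-dimensional `S ⊗ R` gives the kernel.
-/

open Module

theorem LinearMap.pi_surjective_of_linearIndependent {K N ι : Type*} [Field K] [Finite ι]
    [AddCommGroup N] [Module K N] {f : ι → N →ₗ[K] K} (hf : LinearIndependent K f) :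
    Function.Surjective (LinearMap.pi f) := by
  have hf' : LinearIndependent K fun i ↦ ⇑(f i) :=
    hf.map' (LinearMap.ltoFun K N K K) (LinearMap.ker_eq_bot.mpr DFunLike.coe_injective)
  rw [← LinearMap.range_eq_top, ← span_flip_eq_top_iff_linearIndependent.mpr hf',
    ← (LinearMap.range (LinearMap.pi f)).span_eq, LinearMap.coe_range]
  rfl

theorem LinearMap.range_eq_iSup_range_of_apply_tmul {K M N W ι : Type*} [Field K] [Fintype ι]
    [AddCommGroup M] [Module K M] [AddCommGroup N] [Module K N] [AddCommGroup W] [Module K W]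
    (A : ι → M →ₗ[K] W) {f : ι → N →ₗ[K] K} (hf : LinearIndependent K f)
    {T : M ⊗[K] N →ₗ[K] W} (hT : ∀ m n, T (m ⊗ₜ n) = ∑ i, f i n • A i m) :
    LinearMap.range T = ⨆ i, LinearMap.range (A i) := by
  apply le_antisymm
  · rw [LinearMap.range_eq_map, ← TensorProduct.span_tmul_eq_top, Submodule.map_span,
      Submodule.span_le]
    rintro _ ⟨_, ⟨m, n, rfl⟩, rfl⟩
    rw [SetLike.mem_coe, hT]
    exact Submodule.sum_mem _ fun i _ ↦
      Submodule.smul_mem _ _ (Submodule.mem_iSup_of_mem i (LinearMap.mem_range_self _ m))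
  · refine iSup_le fun i ↦ ?_
    classical
    obtain ⟨c, hc⟩ := LinearMap.pi_surjective_of_linearIndependent hf (Pi.single i 1)
    have hfc (j : ι) : f j c = (Pi.single i 1 : ι → K) j := congrFun hc j
    rintro _ ⟨m, rfl⟩
    exact ⟨m ⊗ₜ c, by simp [hT, hfc, Pi.single_apply]⟩

theorem exists_basis_fin_four_of_linearIndependent_pair {K V : Type*} [Field K] [AddCommGroup V]
    [Module K V] (hV : finrank K V = 4) {v₁ v₂ : V} (hv : LinearIndependent K ![v₁, v₂]) :
    ∃ b : Basis (Fin 4) K V, b 0 = v₁ ∧ b 1 = v₂ := by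
  obtain ⟨u, hu⟩ := exists_linearIndependent_snoc_of_lt_finrank hv (by omega)
  obtain ⟨w, hw⟩ := exists_linearIndependent_snoc_of_lt_finrank hu (by omega)
  refine ⟨basisOfLinearIndependentOfCardEqFinrank hw (by simp [hV]), ?_, ?_⟩ <;> simp

section Wedge

variable {S : Type} [AddCommGroup S] [Module ℂ S]

theorem wedge_eq_ιMulti (s t : S) : wedge s t = exteriorPower.ιMulti ℂ 2 ![s, t] :=
  Subtype.ext <| by simp [wedge, ExteriorAlgebra.ιMulti_apply]

theorem wedge_self (s : S) : wedge s s = 0 := Subtype.ext <| by simp [wedge]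

theorem wedge_comm (s t : S) : wedge s t = -wedge t s :=
  Subtype.ext <| eq_neg_of_add_eq_zero_left (ι_add_mul_swap s t)

theorem pairingDual_ιMulti_wedge (f g : Dual ℂ S) (s t : S) :
    exteriorPower.pairingDual ℂ S 2 (exteriorPower.ιMulti ℂ 2 ![f, g]) (wedge s t) =
      f s * g t - g s * f t := by
  simp [wedge_eq_ιMulti, exteriorPower.pairingDual_ιMulti_ιMulti, Matrix.det_fin_two]

theorem Submodule.eq_top_of_forall_wedge_basis_mem {ι : Type*} (b : Basis ι ℂ S)
    {V : Submodule ℂ (⋀[ℂ]^2 S)} (h : ∀ i j, wedge (b i) (b j) ∈ V) : V = ⊤ := by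
  rw [eq_top_iff, ← exteriorPower.ιMulti_span_of_span ℂ 2 S b.span_eq, Submodule.span_le]
  rintro _ ⟨a, ha, rfl⟩
  obtain ⟨i, hi⟩ := ha (Set.mem_range_self 0)
  obtain ⟨j, hj⟩ := ha (Set.mem_range_self 1)
  have ha' : a = ![b i, b j] := by ext k; fin_cases k <;> simp [hi, hj]
  rw [ha', ← wedge_eq_ιMulti]
  exact h i j

theorem finrank_range_wedgeMap_sup_eq_five (b : Basis (Fin 4) ℂ S) :
    finrank ℂ ↥(LinearMap.range (wedgeMap (b 0)) ⊔ LinearMap.range (wedgeMap (b 1))) = 5 := by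
  set U := LinearMap.range (wedgeMap (b 0)) ⊔ LinearMap.range (wedgeMap (b 1))
  set φ := exteriorPower.pairingDual ℂ S 2 (exteriorPower.ιMulti ℂ 2 ![b.coord 2, b.coord 3])
  have hφU : U ≤ LinearMap.ker φ := by
    refine sup_le ?_ ?_ <;> rintro _ ⟨t, rfl⟩ <;>
      simp [φ, wedgeMap, pairingDual_ιMulti_wedge]
  have hφ : φ (wedge (b 2) (b 3)) = 1 := by simp [φ, pairingDual_ιMulti_wedge]
  have hnotMem : wedge (b 2) (b 3) ∉ U := fun h ↦ by simpa [hφ] using hφU h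
  have hspan : U ⊔ Submodule.span ℂ {wedge (b 2) (b 3)} = ⊤ := by
    set V := U ⊔ Submodule.span ℂ {wedge (b 2) (b 3)}
    have h₀ (j : Fin 4) : wedge (b 0) (b j) ∈ V :=
      Submodule.mem_sup_left (Submodule.mem_sup_left ⟨b j, rfl⟩)
    have h₁ (j : Fin 4) : wedge (b 1) (b j) ∈ V :=
      Submodule.mem_sup_left (Submodule.mem_sup_right ⟨b j, rfl⟩)
    have h₂₃ : wedge (b 2) (b 3) ∈ V :=
      Submodule.mem_sup_right (Submodule.mem_span_singleton_self _)
    have hswap {s t : S} (h : wedge s t ∈ V) : wedge t s ∈ V := by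
      rw [wedge_comm]
      exact V.neg_mem h
    refine Submodule.eq_top_of_forall_wedge_basis_mem b fun i j ↦ ?_
    fin_cases i <;> fin_cases j <;>
      first
      | exact h₀ _ | exact h₁ _ | exact hswap (h₀ _) | exact hswap (h₁ _)
      | exact h₂₃ | exact hswap h₂₃ | (rw [wedge_self]; exact V.zero_mem)
  have : Module.Finite ℂ S := .of_basis b
  have hrank := Submodule.finrank_sup_span_singleton hnotMem
  rw [hspan, finrank_top, exteriorPower.finrank_eq, finrank_eq_card_basis b,
    Fintype.card_fin] at hrank
  have hchoose : Nat.choose 4 2 = 6 := rfl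
  omega

end Wedge

theorem nonminimal_supercharge_image_is_five_dimensional_general
    {S R : Type} [AddCommGroup S] [Module ℂ S] [FiniteDimensional ℂ S]
    [AddCommGroup R] [Module ℂ R] [FiniteDimensional ℂ R]
    (hS : Module.finrank ℂ S = 4) (hR : Module.finrank ℂ R = 4)
    (ω : R →ₗ[ℂ] R →ₗ[ℂ] ℂ)
    (hnd : ∀ r : R, (∀ r' : R, ω r r' = 0) → r = 0)
    (β : (S ⊗[ℂ] R) →ₗ[ℂ] (S ⊗[ℂ] R) →ₗ[ℂ] ⋀[ℂ]^2 S)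
    (hβ : ∀ (s s' : S) (r r' : R),
      β (s ⊗ₜ[ℂ] r) (s' ⊗ₜ[ℂ] r') = ω r r' • wedge s s')
    (s₁ s₂ : S) (r₁ r₂ : R)
    (hs : LinearIndependent ℂ ![s₁, s₂])
    (hr : LinearIndependent ℂ ![r₁, r₂]) :
    LinearMap.range (β (s₁ ⊗ₜ[ℂ] r₁ + s₂ ⊗ₜ[ℂ] r₂)) =
      LinearMap.range (wedgeMap s₁) ⊔ LinearMap.range (wedgeMap s₂) ∧
    Module.finrank ℂ ↥(LinearMap.range (β (s₁ ⊗ₜ[ℂ] r₁ + s₂ ⊗ₜ[ℂ] r₂))) = 5 ∧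
    Module.finrank ℂ ↥(LinearMap.ker (β (s₁ ⊗ₜ[ℂ] r₁ + s₂ ⊗ₜ[ℂ] r₂))) = 11 := by
  have hω : LinearIndependent ℂ ![ω r₁, ω r₂] := by
    have hker : LinearMap.ker ω = ⊥ :=
      LinearMap.ker_eq_bot'.mpr fun r hr ↦ hnd r fun r' ↦ LinearMap.congr_fun hr r'
    have hcomp : ⇑ω ∘ ![r₁, r₂] = ![ω r₁, ω r₂] := by ext i; fin_cases i <;> rfl
    exact hcomp ▸ hr.map' ω hker
  have hrange : LinearMap.range (β (s₁ ⊗ₜ[ℂ] r₁ + s₂ ⊗ₜ[ℂ] r₂)) =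
      LinearMap.range (wedgeMap s₁) ⊔ LinearMap.range (wedgeMap s₂) := by
    rw [LinearMap.range_eq_iSup_range_of_apply_tmul ![wedgeMap s₁, wedgeMap s₂] hω
      (fun s r ↦ by simp [hβ, wedgeMap]), ← Finset.sup_univ_eq_iSup]
    simp [Fin.univ_succ]
  obtain ⟨b, rfl, rfl⟩ := exists_basis_fin_four_of_linearIndependent_pair hS hs
  have hfive := finrank_range_wedgeMap_sup_eq_five b
  have hrank := LinearMap.finrank_range_add_finrank_ker (β (b 0 ⊗ₜ[ℂ] r₁ + b 1 ⊗ₜ[ℂ] r₂))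
  rw [Module.finrank_tensorProduct, hS, hR, hrange, hfive] at hrank
  exact ⟨hrange, hrange ▸ hfive, by omega⟩

/-- Suppose `dim_ℂ S = 4` and `dim_ℂ R = 4`, and let `Q = s₁ ⊗ r₁ + s₂ ⊗ r₂` be a nonminimal
square-zero supercharge of the `N=(2,0)` algebra (`s₁, s₂` linearly independent, `r₁, r₂`
linearly independent, `ω r₁ r₂ = 0`).  Then the range of `β (Q, -) : S ⊗ R → ⋀²S` equals
`(s₁ ∧ S) + (s₂ ∧ S)` and is 5-dimensional, and the kernel of `β (Q, -)` is 11-dimensional: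
a nonminimal supercharge has five invariant directions. -/
theorem nonminimal_supercharge_image_is_five_dimensional
    {S R : Type} [AddCommGroup S] [Module ℂ S] [FiniteDimensional ℂ S]
    [AddCommGroup R] [Module ℂ R] [FiniteDimensional ℂ R]
    (hS : Module.finrank ℂ S = 4) (hR : Module.finrank ℂ R = 4)
    (ω : R →ₗ[ℂ] R →ₗ[ℂ] ℂ)
    (halt : ∀ r : R, ω r r = 0)
    (hnd : ∀ r : R, (∀ r' : R, ω r r' = 0) → r = 0)
    (β : (S ⊗[ℂ] R) →ₗ[ℂ] (S ⊗[ℂ] R) →ₗ[ℂ] ⋀[ℂ]^2 S)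
    (hβ : ∀ (s s' : S) (r r' : R),
      β (s ⊗ₜ[ℂ] r) (s' ⊗ₜ[ℂ] r') = ω r r' • wedge s s')
    (s₁ s₂ : S) (r₁ r₂ : R)
    (hs : LinearIndependent ℂ ![s₁, s₂])
    (hr : LinearIndependent ℂ ![r₁, r₂])
    (hω : ω r₁ r₂ = 0) :
    LinearMap.range (β (s₁ ⊗ₜ[ℂ] r₁ + s₂ ⊗ₜ[ℂ] r₂)) =
      LinearMap.range (wedgeMap s₁) ⊔ LinearMap.range (wedgeMap s₂) ∧
    Module.finrank ℂ ↥(LinearMap.range (β (s₁ ⊗ₜ[ℂ] r₁ + s₂ ⊗ₜ[ℂ] r₂))) = 5 ∧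
    Module.finrank ℂ ↥(LinearMap.ker (β (s₁ ⊗ₜ[ℂ] r₁ + s₂ ⊗ₜ[ℂ] r₂))) = 11 :=
  nonminimal_supercharge_image_is_five_dimensional_general hS hR ω hnd β hβ s₁ s₂ r₁ r₂ hs hr
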